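/- arXiv:1301.2704 — 2 statements merged into one kernel-verified Lean document; each statement's English description precedes it below -/
import Mathlib

section
/- In the q-deformed Witt superalgebra W^q, the super Hom-Jacobi identity for the triple (L_n, L_m, L_p) reduces to the scalar identity (1+qⁿ)({p}-{m})({m+p}-{n}) + (1+q^p)({m}-{n})({n+m}-{p}) + (1+q^m)({n}-{p})({p+n}-{m}) = 0 for all integers n, m, p. -/
/-- The q-number `{n} = (1-q^n)/(1-q)`. -/
noncomputable def qnum (q : ℂ) (n : ℤ) : ℂ := (1 - q ^ n) / (1 - q)

/-- In `W^q`, the super Hom-Jacobi identity for the triple `(L_n, L_m, L_p)` reduces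
to the scalar identity
`(1+qⁿ)({p}-{m})({m+p}-{n}) + (1+q^p)({m}-{n})({n+m}-{p})
 + (1+q^m)({n}-{p})({p+n}-{m}) = 0` for all integers `n, m, p`. -/
theorem homJacobi_LLL_scalar (q : ℂ) (hq0 : q ≠ 0) (hq1 : q ≠ 1) (n m p : ℤ) :
    (1 + q ^ n) * (qnum q p - qnum q m) * (qnum q (m + p) - qnum q n)
      + (1 + q ^ p) * (qnum q m - qnum q n) * (qnum q (n + m) - qnum q p)
      + (1 + q ^ m) * (qnum q n - qnum q p) * (qnum q (p + n) - qnum q m) = 0 := by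
  have h : (1 : ℂ) - q ≠ 0 := sub_ne_zero.mpr (Ne.symm hq1)
  simp only [qnum, zpow_add₀ hq0]
  field_simp
  ring
end

section
/- In the q-deformed Witt superalgebra W^q, the super Hom-Jacobi identity applied to (L_n, L_m, G_p) reduces to the scalar identity (1+qⁿ)({p+1}-{m})({m+p+1}-{n}) - (1+q^m)({p+1}-{n})({n+p+1}-{m}) + (1+q^{p+1})({m}-{n})({n+m}-{p+1}) = 0 for all integers n, m, p. -/
/-- In `W^q`, the super Hom-Jacobi identity applied to `(L_n, L_m, G_p)` reduces to
the scalar identity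
`(1+qⁿ)({p+1}-{m})({m+p+1}-{n}) - (1+q^m)({p+1}-{n})({n+p+1}-{m})
 + (1+q^{p+1})({m}-{n})({n+m}-{p+1}) = 0` for all integers `n, m, p`. -/
theorem homJacobi_LLG_scalar (q : ℂ) (hq0 : q ≠ 0) (hq1 : q ≠ 1) (n m p : ℤ) :
    (1 + q ^ n) * (qnum q (p + 1) - qnum q m) * (qnum q (m + p + 1) - qnum q n)
      - (1 + q ^ m) * (qnum q (p + 1) - qnum q n) * (qnum q (n + p + 1) - qnum q m)
      + (1 + q ^ (p + 1)) * (qnum q m - qnum q n) * (qnum q (n + m) - qnum q (p + 1))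
        = 0 := by
  have h1 : (1:ℂ) - q ≠ 0 := sub_ne_zero.mpr (Ne.symm hq1)
  simp only [qnum]
  field_simp
  simp only [zpow_add₀ hq0, zpow_one]
  ring
end
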